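/- arXiv:1509.07235 — 2 statements merged into one kernel-verified Lean document; each statement's English description precedes it below -/
import Mathlib

section
/- If W is an L_n-injective R-module (i.e. Ext^1_R(M,W)=0 for all modules M of flat dimension ≤ n), then Ext^k_R(M,W)=0 for every module M with flat dimension ≤ n and every integer k ≥ 1. -/
open CategoryTheory

/-- Flatness of a module over an arbitrary (possibly noncommutative) ring,
via the equational criterion: every relation is a consequence of trivial relations. -/
def IsFlatMod (R : Type) [Ring R] (M : Type) [AddCommGroup M] [Module R M] : Prop :=
  ∀ (ι : Type) (_ : Fintype ι) (r : ι → R) (x : ι → M),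
    (∑ i, r i • x i = 0) →
      ∃ (κ : Type) (_ : Fintype κ) (a : ι → κ → R) (y : κ → M),
        (∀ i, x i = ∑ j, a i j • y j) ∧ ∀ j, (∑ i, r i * a i j) = 0

variable (R : Type) [Ring R]

/-- `Ext^n_R(M, N) = 0`. -/
def extVanish (n : ℕ) (M N : ModuleCat.{0} R) : Prop :=
  Subsingleton (((Ext ℤ (ModuleCat.{0} R) n).obj (Opposite.op M)).obj N)

/-- `M` has flat dimension at most `n`. -/
def fdLE : ℕ → ModuleCat.{0} R → Prop
  | 0, M => IsFlatMod R M
  | n+1, M => ∃ (K F : ModuleCat.{0} R) (f : K ⟶ F) (g : F ⟶ M),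
      IsFlatMod R F ∧ Function.Injective f ∧ Function.Surjective g ∧
        Function.Exact f g ∧ fdLE n K

/-- `W` is `L_n`-injective: `Ext^1_R(M, W) = 0` for every `M` of flat dimension at most `n`. -/
def LnInj (n : ℕ) (W : ModuleCat.{0} R) : Prop :=
  ∀ M : ModuleCat.{0} R, fdLE R n M → extVanish R 1 M W

/-!
Dimension shifting. A flat module is the quotient of a free module by a flat submodule, and a
module of flat dimension `≤ s + 1` is the quotient of a flat module by a submodule of flat
dimension `≤ s`. Along such a short exact sequence `0 → K → F → M → 0` the long exact sequence
gives `Ext^k(K, W) → Ext^(k+1)(M, W) → Ext^(k+1)(F, W)`, so vanishing of `Ext^k(-, W)` on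
modules of flat dimension `≤ n` propagates from `k` to `k + 1`, first on flat modules and then
on all of them.

The long exact sequence is available for the derived-category `Abelian.Ext`; it agrees with the
`Ext` of the statement (left derived functors of `Hom`) as far as vanishing is concerned, since
both are cocycles modulo coboundaries in `Hom` out of a projective resolution.
-/

section Flatness

variable {R}

theorem isFlatMod_of_subsingleton (A : Type) [AddCommGroup A] [Module R A] [Subsingleton A] :
    IsFlatMod R A := by
  intro ι _ r x _
  refine ⟨Empty, inferInstance, fun _ j => j.elim, fun j => j.elim, fun i => ?_, fun j => j.elim⟩
  simp [Subsingleton.elim (x i) 0]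

theorem isFlatMod_finsupp (α : Type) : IsFlatMod R (α →₀ R) := by
  classical
  intro ι _ r x hx
  set s := Finset.univ.biUnion fun i => (x i).support
  refine ⟨s, inferInstance, fun i b => x i b, fun b => Finsupp.single b 1, fun i => ?_, fun b => ?_⟩
  · have hsub : (x i).support ⊆ s := fun b hb => Finset.mem_biUnion.2 ⟨i, Finset.mem_univ _, hb⟩
    rw [Finset.univ_eq_attach, Finset.sum_attach s (fun b => x i b • Finsupp.single b (1 : R))]
    ext b
    simp only [Finsupp.finsetSum_apply, Finsupp.smul_apply, Finsupp.single_apply, smul_eq_mul,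
      mul_ite, mul_one, mul_zero, Finset.sum_ite_eq' s b (x i)]
    split_ifs with hb
    · rfl
    · exact Finsupp.notMem_support_iff.1 fun h => hb (hsub h)
  · simpa [Finsupp.finsetSum_apply] using congrArg (fun u : α →₀ R => u b) hx

theorem Finset.sum_smul_sum_smul_comm {Y κ κ' : Type} [AddCommGroup Y] [Module R Y] [Fintype κ]
    [Fintype κ'] (a : κ → R) (b : κ → κ' → R) (u : κ' → Y) :
    ∑ j, a j • ∑ l, b j l • u l = ∑ l, (∑ j, a j * b j l) • u l := by
  simp only [Finset.smul_sum, Finset.sum_smul, smul_smul]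
  exact Finset.sum_comm

variable {M : Type} [AddCommGroup M] [Module R M]

theorem IsFlatMod.exists_factorization (hM : IsFlatMod R M) (n : ℕ) (κ : Type) [Fintype κ]
    (a : Fin n → κ → R) (m : κ → M) (hrel : ∀ i, ∑ j, a i j • m j = 0) :
    ∃ (κ' : Type) (_ : Fintype κ') (b : κ → κ' → R) (z : κ' → M),
      (∀ j, m j = ∑ l, b j l • z l) ∧ ∀ i l, ∑ j, a i j * b j l = 0 := by
  classical
  induction n generalizing κ with
  | zero =>
    refine ⟨κ, ‹_›, fun j l => if j = l then 1 else 0, m, fun j => ?_, fun i => i.elim0⟩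
    simp [ite_smul]
  | succ n ih =>
    -- Trivialize the first relation, then the images of the remaining ones.
    obtain ⟨κ₀, _, c, z', hc, hc0⟩ := hM κ ‹_› (a 0) m (hrel 0)
    have hrel' : ∀ i : Fin n, ∑ l, (∑ j, a i.succ j * c j l) • z' l = 0 := fun i => by
      rw [← Finset.sum_smul_sum_smul_comm, ← hrel i.succ]
      simp only [hc]
    obtain ⟨κ', _, d, z, hd, hd0⟩ := ih κ₀ (fun i l => ∑ j, a i.succ j * c j l) z' hrel'
    refine ⟨κ', ‹_›, fun j t => ∑ l, c j l * d l t, z, fun j => ?_, fun i t => ?_⟩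
    · rw [hc j, ← Finset.sum_smul_sum_smul_comm]
      simp only [hd]
    · have hassoc : ∑ j, a i j * ∑ l, c j l * d l t = ∑ l, (∑ j, a i j * c j l) * d l t := by
        simp only [Finset.mul_sum, Finset.sum_mul, mul_assoc]
        exact Finset.sum_comm
      rw [hassoc]
      refine Fin.cases ?_ (fun i' => hd0 i' t) i
      simp [hc0]

variable {K Y : Type} [AddCommGroup K] [Module R K] [AddCommGroup Y] [Module R Y]

theorem isFlatMod_of_exact {f : K →ₗ[R] Y} {g : Y →ₗ[R] M} (hf : Function.Injective f)
    (hg : Function.Surjective g) (hfg : Function.Exact f g) (hY : IsFlatMod R Y)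
    (hM : IsFlatMod R M) : IsFlatMod R K := by
  classical
  intro ι _ r k hrel
  obtain ⟨κ, _, a, y, hy, ha⟩ := hY ι ‹_› r (fun i => f (k i)) (by
    simpa [map_sum, map_smul] using congrArg f hrel)
  -- The images `g (y j)` satisfy the relations `a`; factor them through `M` and lift back.
  let e := (Fintype.equivFin ι).symm
  obtain ⟨κ', _, b, z, hz, hb⟩ := hM.exists_factorization (Fintype.card ι) κ
    (fun i => a (e i)) (fun j => g (y j)) fun i => by
      rw [← hfg.apply_apply_eq_zero (k (e i)), hy, map_sum]
      simp only [map_smul]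
  have hb' : ∀ i l, ∑ j, a i j * b j l = 0 := fun i l => by
    simpa [e] using hb (Fintype.equivFin ι i) l
  choose w hw using hg
  let y' : κ → Y := fun j => y j - ∑ l, b j l • w (z l)
  have hy' : ∀ j, ∃ k', f k' = y' j := fun j => (hfg (y' j)).mp (by simp [y', hw, ← hz j])
  choose k' hk' using hy'
  refine ⟨κ, ‹_›, a, k', fun i => hf ?_, ha⟩
  rw [hy i, map_sum]
  simp only [map_smul, hk', y', smul_sub, Finset.sum_sub_distrib,
    Finset.sum_smul_sum_smul_comm, hb', zero_smul, Finset.sum_const_zero, sub_zero]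

end Flatness

section FlatDimension

variable {R}

theorem fdLE_succ_of_fdLE : ∀ {n : ℕ} {M : ModuleCat.{0} R}, fdLE R n M → fdLE R (n + 1) M
  | 0, M, hM =>
    ⟨ModuleCat.of R PUnit, M, 0, 𝟙 M, hM, fun _ _ _ => Subsingleton.elim _ _,
      fun m => ⟨m, rfl⟩, fun _ => ⟨fun hy => ⟨PUnit.unit, hy.symm⟩, fun ⟨_, hx⟩ => hx ▸ rfl⟩,
      isFlatMod_of_subsingleton _⟩
  | _ + 1, _, ⟨K, F, f, g, hF, hf, hg, hfg, hK⟩ =>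
    ⟨K, F, f, g, hF, hf, hg, hfg, fdLE_succ_of_fdLE hK⟩

theorem fdLE_of_isFlatMod {M : ModuleCat.{0} R} (hM : IsFlatMod R M) : ∀ n, fdLE R n M
  | 0 => hM
  | _ + 1 => fdLE_succ_of_fdLE (fdLE_of_isFlatMod hM _)

end FlatDimension

namespace CategoryTheory

variable {C : Type*} [Category C] [Abelian C]

namespace ProjectiveResolution

variable {X : C} (P : ProjectiveResolution X) (Y : C) (p : ℕ)

theorem subsingleton_abelianExt_iff [HasExt C] :
    Subsingleton (Abelian.Ext X Y (p + 1)) ↔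
      ∀ f : P.complex.X (p + 1) ⟶ Y, P.complex.d (p + 2) (p + 1) ≫ f = 0 →
        ∃ g, P.complex.d (p + 1) p ≫ g = f := by
  constructor
  · intro _ f hf
    exact (P.extMk_eq_zero_iff f (p + 2) rfl hf p rfl).1 (Subsingleton.elim _ _)
  · intro h
    refine subsingleton_of_forall_eq 0 fun α => ?_
    obtain ⟨f, hf, rfl⟩ := P.extMk_surjective α (p + 2) rfl
    exact (P.extMk_eq_zero_iff f (p + 2) rfl hf p rfl).2 (h f hf)

theorem subsingleton_ext_iff (A : Type*) [Ring A] [Linear A C] [EnoughProjectives C] :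
    Subsingleton (((Ext A C (p + 1)).obj (Opposite.op X)).obj Y) ↔
      ∀ f : P.complex.X (p + 1) ⟶ Y, P.complex.d (p + 2) (p + 1) ≫ f = 0 →
        ∃ g, P.complex.d (p + 1) p ≫ g = f := by
  rw [((forget _).mapIso (P.isoExt (p + 1) Y)).toEquiv.subsingleton_congr,
    ← ModuleCat.isZero_iff_subsingleton, ← HomologicalComplex.exactAt_iff_isZero_homology,
    HomologicalComplex.exactAt_iff' _ p (p + 1) (p + 2) (by simp) (by simp),
    ShortComplex.moduleCat_exact_iff]
  rfl

end ProjectiveResolution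

theorem subsingleton_ext_succ_iff_abelianExt (A : Type*) [Ring A] [Linear A C]
    [EnoughProjectives C] [HasExt C] (X Y : C) (p : ℕ) :
    Subsingleton (((Ext A C (p + 1)).obj (Opposite.op X)).obj Y) ↔
      Subsingleton (Abelian.Ext X Y (p + 1)) := by
  rw [(projectiveResolution X).subsingleton_ext_iff,
    (projectiveResolution X).subsingleton_abelianExt_iff]

theorem Abelian.Ext.subsingleton_of_shortExact [HasExt C] {S : ShortComplex C}
    (hS : S.ShortExact) (Y : C) (k : ℕ) (h₁ : Subsingleton (Abelian.Ext S.X₁ Y k))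
    (h₂ : Subsingleton (Abelian.Ext S.X₂ Y (k + 1))) :
    Subsingleton (Abelian.Ext S.X₃ Y (k + 1)) := by
  refine subsingleton_of_forall_eq 0 fun x => ?_
  obtain ⟨x₁, rfl⟩ := Abelian.Ext.contravariant_sequence_exact₃ hS Y x
    (Subsingleton.elim _ _) (add_comm 1 k)
  rw [Subsingleton.elim x₁ 0, Abelian.Ext.comp_zero]

end CategoryTheory

section ExtVanishing

variable {R}

theorem subsingleton_abelianExt_succ_of_isFlatMod {n k : ℕ} {W : ModuleCat.{0} R}
    (hk : ∀ M, fdLE R n M → Subsingleton (Abelian.Ext M W k)) {G : ModuleCat.{0} R}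
    (hG : IsFlatMod R G) : Subsingleton (Abelian.Ext G W (k + 1)) := by
  let π : (G →₀ R) →ₗ[R] G := Finsupp.linearCombination R id
  have hπ : Function.Surjective π := Finsupp.linearCombination_id_surjective R G
  have hker : IsFlatMod R (LinearMap.ker π) := isFlatMod_of_exact
    (LinearMap.ker π).injective_subtype hπ π.exact_subtype_ker_map (isFlatMod_finsupp G) hG
  exact Abelian.Ext.subsingleton_of_shortExact (LinearMap.shortExact_shortComplexKer hπ) W k
    (hk _ (fdLE_of_isFlatMod hker n)) (Abelian.Ext.subsingleton_of_projective _ _ k)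

theorem subsingleton_abelianExt_succ_of_fdLE {n k : ℕ} {W : ModuleCat.{0} R}
    (hk : ∀ M, fdLE R n M → Subsingleton (Abelian.Ext M W k)) (M : ModuleCat.{0} R)
    (hM : fdLE R n M) : Subsingleton (Abelian.Ext M W (k + 1)) := by
  cases n with
  | zero => exact subsingleton_abelianExt_succ_of_isFlatMod hk hM
  | succ s =>
    obtain ⟨K, F, f, g, hF, hf, hg, hfg, hK⟩ := hM
    have hS := ModuleCat.shortComplex_shortExact
      (ShortComplex.mk f g (by ext; exact hfg.apply_apply_eq_zero _)) hfg hf hg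
    exact Abelian.Ext.subsingleton_of_shortExact hS W k (hk K (fdLE_succ_of_fdLE hK))
      (subsingleton_abelianExt_succ_of_isFlatMod hk hF)

end ExtVanishing

/-- If `W` is `L_n`-injective, then `Ext^k_R(M, W) = 0` for every `M` of flat
dimension at most `n` and every `k ≥ 1`. -/
theorem stmt0 (n : ℕ) (W : ModuleCat.{0} R) (hW : LnInj R n W) :
    ∀ M : ModuleCat.{0} R, fdLE R n M → ∀ k : ℕ, 1 ≤ k → extVanish R k M W := by
  intro M hM k hk
  obtain ⟨p, rfl⟩ := Nat.exists_eq_add_of_le' hk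
  rw [extVanish, subsingleton_ext_succ_iff_abelianExt]
  clear hk
  induction p generalizing M with
  | zero => exact (subsingleton_ext_succ_iff_abelianExt ℤ M W 0).1 (hW M hM)
  | succ p ih => exact subsingleton_abelianExt_succ_of_fdLE ih M hM
end

section
/- Given a short exact sequence 0 → A → B → C → 0 of R-modules with A L_n-injective, B is L_n-injective if and only if C is L_n-injective. -/
/-!
Let `0 → K → P₀ → M → 0` start a projective resolution of `M`; then `Ext¹(M, N) = 0` says exactly
that every map `K → N` extends to `P₀`. If `Ext¹(M, A) = Ext¹(M, C) = 0`, a map `K → B` extends by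
a diagram chase. Conversely, `Ext¹(K, A) = 0` makes every map `K → C` lift to `B`, and the lift
extends to `P₀` since `Ext¹(M, B) = 0`; so it remains to see that `K` has flat dimension at most
`n` when `M` does. Lifting `P₀ → M` through a flat presentation `G → M` gives an exact sequence
`0 → K → ker(G → M) × P₀ → G → 0`, and passing to the kernel of a surjection onto a flat module
does not raise flat dimension, because kernels of surjections between flat modules are flat
(trivialize the relations in the target simultaneously and lift them).
-/

open CategoryTheory

variable (R : Type) [Ring R]

section Flat

variable {R} {M N : Type} [AddCommGroup M] [Module R M] [AddCommGroup N] [Module R N]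

lemma sum_smul_sum_smul {ι κ : Type} [Fintype ι] [Fintype κ] (a : ι → R) (c : ι → κ → R)
    (u : κ → M) :
    ∑ i, a i • ∑ j, c i j • u j = ∑ j, (∑ i, a i * c i j) • u j := by
  simp_rw [Finset.smul_sum, smul_smul, Finset.sum_smul]
  exact Finset.sum_comm

lemma IsFlatMod.of_retract (hN : IsFlatMod R N) (i : M →ₗ[R] N) (r : N →ₗ[R] M)
    (hri : r ∘ₗ i = LinearMap.id) : IsFlatMod R M := by
  intro ι _ a x hx
  obtain ⟨κ, _, b, y, hy, hab⟩ := hN ι inferInstance a (i ∘ x) (by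
    simp_rw [Function.comp_apply, ← map_smul, ← map_sum, hx, map_zero])
  refine ⟨κ, inferInstance, b, r ∘ y, fun t => ?_, hab⟩
  simpa [← LinearMap.comp_apply, hri] using congrArg r (hy t)

lemma IsFlatMod.of_linearEquiv (hM : IsFlatMod R M) (e : M ≃ₗ[R] N) : IsFlatMod R N :=
  hM.of_retract e.symm.toLinearMap e.toLinearMap (by ext; simp)

lemma IsFlatMod.finsupp (σ : Type) : IsFlatMod R (σ →₀ R) := by
  classical
  intro ι _ r x hx
  let S := Finset.univ.biUnion fun i => (x i).support
  refine ⟨S, inferInstance, fun i s => x i s.1, fun s => Finsupp.single s.1 1, fun i => ?_,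
    fun s => by simpa using DFunLike.congr_fun hx s.1⟩
  conv_lhs => rw [← (x i).sum_single]
  rw [Finsupp.sum_of_support_subset _
    (Finset.subset_biUnion_of_mem (fun i => (x i).support) (Finset.mem_univ i)) _ (by simp),
    ← Finset.sum_coe_sort S]
  simp [Finsupp.smul_single]

lemma IsFlatMod.of_projective [Module.Projective R M] : IsFlatMod R M := by
  obtain ⟨s, hs⟩ := Module.Projective.out (R := R) (P := M)
  exact (IsFlatMod.finsupp M).of_retract s (Finsupp.linearCombination R id) (LinearMap.ext hs)

lemma IsFlatMod.prod (hM : IsFlatMod R M) (hN : IsFlatMod R N) : IsFlatMod R (M × N) := by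
  intro ι _ r x hx
  obtain ⟨κ₁, _, a, y, hy, ha⟩ := hM ι inferInstance r (fun i => (x i).1) (by
    simpa [Prod.fst_sum] using congrArg Prod.fst hx)
  obtain ⟨κ₂, _, b, z, hz, hb⟩ := hN ι inferInstance r (fun i => (x i).2) (by
    simpa [Prod.snd_sum] using congrArg Prod.snd hx)
  refine ⟨κ₁ ⊕ κ₂, inferInstance, fun i => Sum.elim (a i) (b i),
    Sum.elim (fun j => (y j, 0)) (fun l => (0, z l)), fun i => ?_, ?_⟩
  · ext <;> simp [Fintype.sum_sum_type, Prod.fst_sum, Prod.snd_sum, hy, hz]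
  · rintro (j | l)
    exacts [ha j, hb l]

lemma IsFlatMod.exists_trivialization (hM : IsFlatMod R M) {ε : Type} (s : Finset ε) {ι : Type}
    [Fintype ι] (a : ε → ι → R) (y : ι → M) (h : ∀ e ∈ s, ∑ i, a e i • y i = 0) :
    ∃ (κ : Type) (_ : Fintype κ) (b : ι → κ → R) (z : κ → M),
      (∀ i, y i = ∑ j, b i j • z j) ∧ ∀ e ∈ s, ∀ j, ∑ i, a e i * b i j = 0 := by
  classical
  induction s using Finset.induction_on generalizing ι with
  | empty =>
    exact ⟨ι, inferInstance, fun i j => if i = j then 1 else 0, y, by simp [ite_smul], by simp⟩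
  | insert e₀ s _ ih =>
    obtain ⟨κ, _, c, u, hu, hc⟩ := hM ι inferInstance (a e₀) y (h e₀ (s.mem_insert_self e₀))
    obtain ⟨κ', _, b, z, hz, hb⟩ := ih (fun e j => ∑ i, a e i * c i j) u fun e he => by
      rw [← sum_smul_sum_smul]
      simp_rw [← hu]
      exact h e (Finset.mem_insert_of_mem he)
    refine ⟨κ', inferInstance, fun i l => ∑ j, c i j * b j l, z, fun i => ?_, fun e he l => ?_⟩
    · simp_rw [hu i, hz, sum_smul_sum_smul]
    · have hassoc := sum_smul_sum_smul (M := R) (a e) c (fun j => b j l)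
      simp only [smul_eq_mul] at hassoc
      rw [hassoc]
      rcases Finset.mem_insert.1 he with rfl | he
      · simp [hc]
      · exact hb e he l

lemma IsFlatMod.ker (hM : IsFlatMod R M) (hN : IsFlatMod R N) {θ : M →ₗ[R] N}
    (hθ : Function.Surjective θ) : IsFlatMod R (LinearMap.ker θ) := by
  intro ι _ r k hk
  obtain ⟨κ, _, a, y, hy, ha⟩ := hM ι inferInstance r (fun i => k i) (by
    simpa using congrArg Subtype.val hk)
  obtain ⟨κ', _, b, z, hz, hb⟩ := hN.exists_trivialization Finset.univ a (θ ∘ y) fun i _ => by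
    have hki := (k i).2
    rw [LinearMap.mem_ker, hy i, map_sum] at hki
    simpa using hki
  choose w hw using fun l => hθ (z l)
  -- correct the `y j` by lifts of the trivializing elements `z l` so that they lie in `ker θ`
  have hy' (j : κ) : y j - ∑ l, b j l • w l ∈ LinearMap.ker θ := by
    rw [LinearMap.mem_ker, map_sub, map_sum]
    simp only [map_smul, hw]
    exact sub_eq_zero.2 (hz j)
  refine ⟨κ, inferInstance, a, fun j => ⟨_, hy' j⟩, fun i => Subtype.ext ?_, ha⟩
  simp only [Submodule.coe_sum, Submodule.coe_smul, smul_sub, Finset.sum_sub_distrib,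
    sum_smul_sum_smul, ← hy]
  simp [hb i (Finset.mem_univ i)]

end Flat

section FlatDimension

open ModuleCat
variable {R} {M N : Type} [AddCommGroup M] [Module R M] [AddCommGroup N] [Module R N] {m : ℕ}

lemma fdLE_of_linearEquiv (h : fdLE R m (of R M)) (e : M ≃ₗ[R] N) : fdLE R m (of R N) := by
  cases m with
  | zero => exact IsFlatMod.of_linearEquiv h e
  | succ m =>
    obtain ⟨K, F, f, g, hF, hf, hg, hfg, hK⟩ := h
    exact ⟨K, F, f, g ≫ ofHom e.toLinearMap, hF, hf, e.surjective.comp hg,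
      hfg.comp_injective _ e.injective e.map_zero, hK⟩

lemma fdLE_succ_iff : fdLE R (m + 1) (of R M) ↔ ∃ (F : ModuleCat.{0} R) (θ : F →ₗ[R] M),
    IsFlatMod R F ∧ Function.Surjective θ ∧ fdLE R m (of R (LinearMap.ker θ)) := by
  constructor
  · rintro ⟨K, F, f, g, hF, hf, hg, hfg, hK⟩
    exact ⟨F, g.hom, hF, hg, fdLE_of_linearEquiv hK ((LinearEquiv.ofInjective f.hom hf).trans
      (LinearEquiv.ofEq _ _ (hfg.linearMap_ker_eq (f := f.hom) (g := g.hom)).symm))⟩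
  · rintro ⟨F, θ, hF, hθ, hK⟩
    exact ⟨of R (LinearMap.ker θ), F, ofHom (LinearMap.ker θ).subtype, ofHom θ, hF,
      Subtype.val_injective, hθ, θ.exact_subtype_ker_map, hK⟩

lemma fdLE_succ_of_fdLE_s4 (h : fdLE R m (of R M)) : fdLE R (m + 1) (of R M) := by
  induction m generalizing M with
  | zero =>
    have hρ := Finsupp.linearCombination_id_surjective R M
    exact fdLE_succ_iff.2 ⟨of R (M →₀ R), _, IsFlatMod.finsupp M, hρ,
      (IsFlatMod.finsupp M).ker h hρ⟩
  | succ m ih =>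
    obtain ⟨F, θ, hF, hθ, hK⟩ := fdLE_succ_iff.1 h
    exact fdLE_succ_iff.2 ⟨F, θ, hF, hθ, ih hK⟩

lemma fdLE_prod_of_isFlatMod (hM : fdLE R m (of R M)) (hN : IsFlatMod R N) :
    fdLE R m (of R (M × N)) := by
  cases m with
  | zero => exact IsFlatMod.prod hM hN
  | succ m =>
    obtain ⟨F, θ, hF, hθ, hK⟩ := fdLE_succ_iff.1 hM
    let e : LinearMap.ker θ ≃ₗ[R] LinearMap.ker (θ.prodMap (LinearMap.id (M := N))) :=
      .ofBijective ((LinearMap.inl R F N).restrict fun x hx => by simpa using hx)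
        ⟨fun x y hxy => Subtype.ext (congrArg (fun z => z.1.1) hxy), by
          rintro ⟨⟨x, y⟩, hxy⟩
          obtain ⟨hx, rfl⟩ := Prod.ext_iff.1 hxy
          exact ⟨⟨x, hx⟩, rfl⟩⟩
    exact fdLE_succ_iff.2 ⟨of R (F × N), θ.prodMap LinearMap.id, hF.prod hN,
      hθ.prodMap Function.surjective_id, fdLE_of_linearEquiv hK e⟩

lemma fdLE_ker_of_isFlatMod (hM : fdLE R m (of R M)) (hN : IsFlatMod R N) {θ : M →ₗ[R] N}
    (hθ : Function.Surjective θ) : fdLE R m (of R (LinearMap.ker θ)) := by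
  cases m with
  | zero => exact IsFlatMod.ker hM hN hθ
  | succ m =>
    obtain ⟨G, ρ, hG, hρ, hK⟩ := fdLE_succ_iff.1 hM
    -- `ker (θ ∘ ρ)` is flat and maps onto `ker θ` with kernel `ker ρ`
    let ρ' := ρ.restrict (p := LinearMap.ker (θ ∘ₗ ρ)) (q := LinearMap.ker θ) fun _ hx => hx
    have hρ' : Function.Surjective ρ' := by
      rintro ⟨x, hx⟩
      obtain ⟨g, rfl⟩ := hρ x
      exact ⟨⟨g, hx⟩, rfl⟩
    let e : LinearMap.ker ρ' ≃ₗ[R] LinearMap.ker ρ :=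
      (LinearEquiv.ofEq _ _ (LinearMap.ker_restrict _)).trans
        (Submodule.comapSubtypeEquivOfLe (LinearMap.ker_le_ker_comp ρ θ))
    exact fdLE_succ_iff.2 ⟨of R (LinearMap.ker (θ ∘ₗ ρ)), ρ', hG.ker hN (hθ.comp hρ), hρ',
      fdLE_of_linearEquiv hK e.symm⟩

lemma fdLE_ker_of_projective [Module.Projective R N] {p : N →ₗ[R] M}
    (hp : Function.Surjective p) (hM : fdLE R m (of R M)) :
    fdLE R m (of R (LinearMap.ker p)) := by
  cases m with
  | zero => exact IsFlatMod.of_projective.ker hM hp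
  | succ m =>
    obtain ⟨G, ρ, hG, hρ, hK⟩ := fdLE_succ_iff.1 hM
    obtain ⟨h, hh⟩ := Module.projective_lifting_property ρ p hρ
    -- comparing the two covers of `M` gives `0 → ker p → ker ρ × N → G → 0`
    let φ := (LinearMap.ker ρ).subtype.coprod h
    have hφ : Function.Surjective φ := by
      intro y
      obtain ⟨x, hx⟩ := hp (ρ y)
      refine ⟨(⟨y - h x, ?_⟩, x), by simp [φ]⟩
      rw [LinearMap.mem_ker, map_sub, ← LinearMap.comp_apply, hh, hx, sub_self]
    have hsnd : ∀ z ∈ LinearMap.ker φ, LinearMap.snd R _ N z ∈ LinearMap.ker p := by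
      rintro ⟨k, x⟩ hz
      rw [LinearMap.mem_ker, ← hh]
      show ρ (h x) = 0
      rw [eq_neg_of_add_eq_zero_right (a := (k : G)) (b := h x) hz, map_neg,
        LinearMap.mem_ker.1 k.2, neg_zero]
    let e : LinearMap.ker φ ≃ₗ[R] LinearMap.ker p :=
      .ofBijective ((LinearMap.snd R _ N).restrict hsnd) ⟨by
        rintro ⟨⟨k, x⟩, hkx⟩ ⟨⟨k', x'⟩, hkx'⟩ hxx'
        obtain rfl : x = x' := congrArg Subtype.val hxx'
        have hk : (k : G) = k' := (eq_neg_of_add_eq_zero_left (b := h x) hkx).trans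
          (eq_neg_of_add_eq_zero_left (b := h x) hkx').symm
        exact Subtype.ext (Prod.ext (Subtype.ext hk) rfl), by
        rintro ⟨x, hx⟩
        refine ⟨⟨(⟨-h x, ?_⟩, x), ?_⟩, rfl⟩
        · rw [LinearMap.mem_ker, map_neg, ← LinearMap.comp_apply, hh, hx, neg_zero]
        · simp [φ]⟩
    exact fdLE_succ_of_fdLE_s4 <| fdLE_of_linearEquiv
      (fdLE_ker_of_isFlatMod (fdLE_prod_of_isFlatMod hK IsFlatMod.of_projective) hG hφ) e

end FlatDimension

section Ext

open ModuleCat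
variable {R}

lemma LinearMap.exists_comp_eq_of_surjective {M N Q : Type} [AddCommGroup M] [Module R M]
    [AddCommGroup N] [Module R N] [AddCommGroup Q] [Module R Q] {π : M →ₗ[R] N}
    (hπ : Function.Surjective π) (v : M →ₗ[R] Q) (h : LinearMap.ker π ≤ LinearMap.ker v) :
    ∃ u : N →ₗ[R] Q, u ∘ₗ π = v :=
  ⟨(LinearMap.ker π).liftQ v h ∘ₗ (π.quotKerEquivOfSurjective hπ).symm.toLinearMap, by
    ext x
    rw [LinearMap.comp_apply, LinearMap.comp_apply, LinearEquiv.coe_coe,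
      ← π.quotKerEquivOfSurjective_apply_mk hπ, LinearEquiv.symm_apply_apply]
    rfl⟩

lemma Function.Exact.exists_comp_eq_of_comp_eq_zero {A B C X : Type} [AddCommGroup A]
    [Module R A] [AddCommGroup B] [Module R B] [AddCommGroup C] [Module R C] [AddCommGroup X]
    [Module R X] {f : A →ₗ[R] B} {g : B →ₗ[R] C} (hfg : Function.Exact f g)
    (hf : Function.Injective f) (u : X →ₗ[R] B) (hu : g ∘ₗ u = 0) : ∃ w : X →ₗ[R] A, f ∘ₗ w = u :=
  ⟨(LinearEquiv.ofInjective f hf).symm.toLinearMap ∘ₗ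
      u.codRestrict _ fun x => hfg.linearMap_ker_eq ▸ LinearMap.congr_fun hu x, by
    ext x
    exact congrArg Subtype.val ((LinearEquiv.ofInjective f hf).apply_symm_apply _)⟩

lemma extVanish_one_iff_cocycle {M : ModuleCat.{0} R} (P : ProjectiveResolution M)
    (N : ModuleCat.{0} R) :
    extVanish R 1 M N ↔ ∀ φ : P.complex.X 1 ⟶ N, P.complex.d 2 1 ≫ φ = 0 →
      ∃ ψ : P.complex.X 0 ⟶ N, P.complex.d 1 0 ≫ ψ = φ := by
  rw [extVanish, (P.isoExt (R := ℤ) 1 N).toLinearEquiv.toEquiv.subsingleton_congr,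
    ← ModuleCat.isZero_iff_subsingleton, ← HomologicalComplex.exactAt_iff_isZero_homology,
    HomologicalComplex.exactAt_iff' _ 0 1 2 (by simp) (by simp),
    ShortComplex.moduleCat_exact_iff]
  rfl

lemma extVanish_one_iff_forall_extend {M : ModuleCat.{0} R} (P : ProjectiveResolution M)
    (N : ModuleCat.{0} R) :
    extVanish R 1 M N ↔ ∀ u : LinearMap.ker (P.π.f 0).hom →ₗ[R] N,
      ∃ v : P.complex.X 0 →ₗ[R] N, v ∘ₗ (LinearMap.ker (P.π.f 0).hom).subtype = u := by
  set d₁ := (P.complex.d 1 0).hom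
  have hd₁ : LinearMap.range d₁ = LinearMap.ker (P.π.f 0).hom :=
    (ShortComplex.moduleCat_exact_iff_range_eq_ker _).1 P.exact₀
  have hd₂ : LinearMap.range (P.complex.d 2 1).hom = LinearMap.ker d₁ :=
    (ShortComplex.moduleCat_exact_iff_range_eq_ker _).1 (P.exact_succ 0)
  -- `d₁` corestricted to the syzygy `ker π`: the map through which every cocycle factors
  let aug := d₁.codRestrict _ fun x => hd₁ ▸ LinearMap.mem_range_self d₁ x
  have haug : Function.Surjective aug := by
    rintro ⟨y, hy⟩
    obtain ⟨x, rfl⟩ := hd₁ ▸ hy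
    exact ⟨x, rfl⟩
  rw [extVanish_one_iff_cocycle P N]
  constructor
  · intro h u
    obtain ⟨ψ, hψ⟩ := h (ofHom (u ∘ₗ aug)) (by
      ext x
      have : aug ((P.complex.d 2 1) x) = 0 :=
        Subtype.ext (LinearMap.congr_fun (congrArg Hom.hom (P.complex.d_comp_d 2 1 0)) x)
      exact (congrArg u this).trans u.map_zero)
    refine ⟨ψ.hom, ?_⟩
    ext ⟨y, hy⟩
    obtain ⟨x, rfl⟩ := hd₁ ▸ hy
    exact LinearMap.congr_fun (congrArg Hom.hom hψ) x
  · intro h φ hφ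
    obtain ⟨u, hu⟩ := LinearMap.exists_comp_eq_of_surjective haug φ.hom (by
      rw [LinearMap.ker_codRestrict, ← hd₂]
      rintro _ ⟨x, rfl⟩
      exact LinearMap.congr_fun (congrArg Hom.hom hφ) x)
    obtain ⟨v, hv⟩ := h u
    refine ⟨ofHom v, ?_⟩
    ext x
    rw [← hu, ← hv]
    rfl

lemma CategoryTheory.ProjectiveResolution.π_surjective {M : ModuleCat.{0} R}
    (P : ProjectiveResolution M) : Function.Surjective (P.π.f 0) :=
  (ModuleCat.epi_iff_surjective _).1 inferInstance

instance CategoryTheory.ProjectiveResolution.projective_X {M : ModuleCat.{0} R}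
    (P : ProjectiveResolution M) (i : ℕ) : Module.Projective R (P.complex.X i) :=
  (IsProjective.iff_projective _).2 (P.projective i)

variable {A B C : ModuleCat.{0} R} {f : A →ₗ[R] B} {g : B →ₗ[R] C}

lemma extVanish_one_middle_of_outer (hf : Function.Injective f) (hg : Function.Surjective g)
    (hfg : Function.Exact f g) {M : ModuleCat.{0} R} (hA : extVanish R 1 M A)
    (hC : extVanish R 1 M C) : extVanish R 1 M B := by
  let P := ProjectiveResolution.of M
  rw [extVanish_one_iff_forall_extend P] at hA hC ⊢
  intro u
  obtain ⟨v, hv⟩ := hC (g ∘ₗ u)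
  obtain ⟨v', rfl⟩ := Module.projective_lifting_property g v hg
  obtain ⟨w, hw⟩ := hfg.exists_comp_eq_of_comp_eq_zero hf
    (u - v' ∘ₗ (LinearMap.ker (P.π.f 0).hom).subtype)
    (by rw [LinearMap.comp_sub, ← LinearMap.comp_assoc, hv, sub_self])
  obtain ⟨w', rfl⟩ := hA w
  exact ⟨v' + f ∘ₗ w', by rw [LinearMap.add_comp, LinearMap.comp_assoc, hw, add_sub_cancel]⟩

lemma exists_comp_eq_of_extVanish_one (hf : Function.Injective f) (hg : Function.Surjective g)
    (hfg : Function.Exact f g) {X : ModuleCat.{0} R} (hX : extVanish R 1 X A)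
    (u : X →ₗ[R] C) : ∃ u' : X →ₗ[R] B, g ∘ₗ u' = u := by
  let Q := ProjectiveResolution.of X
  let π : Q.complex.X 0 →ₗ[R] X := (Q.π.f 0).hom
  have hπ : Function.Surjective π := Q.π_surjective
  obtain ⟨v, hv⟩ := Module.projective_lifting_property g (u ∘ₗ π) hg
  obtain ⟨w, hw⟩ := hfg.exists_comp_eq_of_comp_eq_zero hf (v ∘ₗ (LinearMap.ker π).subtype) (by
    ext ⟨k, hk⟩
    exact (LinearMap.congr_fun hv k).trans ((congrArg u hk).trans u.map_zero))
  obtain ⟨w', rfl⟩ := (extVanish_one_iff_forall_extend Q A).1 hX w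
  obtain ⟨u', hu'⟩ := LinearMap.exists_comp_eq_of_surjective hπ (v - f ∘ₗ w') (by
    intro k hk
    rw [LinearMap.mem_ker, LinearMap.sub_apply, sub_eq_zero]
    exact (LinearMap.congr_fun hw ⟨k, hk⟩).symm)
  refine ⟨u', (LinearMap.cancel_right hπ).1 ?_⟩
  rw [LinearMap.comp_assoc, hu', LinearMap.comp_sub, hv, ← LinearMap.comp_assoc,
    hfg.linearMap_comp_eq_zero, LinearMap.zero_comp, sub_zero]

lemma extVanish_one_right_of_middle (hf : Function.Injective f) (hg : Function.Surjective g)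
    (hfg : Function.Exact f g) {M : ModuleCat.{0} R} (P : ProjectiveResolution M)
    (hB : extVanish R 1 M B) (hK : extVanish R 1 (of R (LinearMap.ker (P.π.f 0).hom)) A) :
    extVanish R 1 M C := by
  rw [extVanish_one_iff_forall_extend P] at hB ⊢
  intro u
  obtain ⟨u', rfl⟩ := exists_comp_eq_of_extVanish_one hf hg hfg hK u
  obtain ⟨v, rfl⟩ := hB u'
  exact ⟨g ∘ₗ v, rfl⟩

end Ext

/-- Given a short exact sequence `0 → A → B → C → 0` with `A` `L_n`-injective,
`B` is `L_n`-injective iff `C` is `L_n`-injective. -/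
theorem stmt4 (n : ℕ) (A B C : ModuleCat.{0} R) (f : A ⟶ B) (g : B ⟶ C)
    (hf : Function.Injective f) (hg : Function.Surjective g) (hfg : Function.Exact f g)
    (hA : LnInj R n A) :
    LnInj R n B ↔ LnInj R n C := by
  constructor
  · intro hB M hM
    let P := ProjectiveResolution.of M
    exact extVanish_one_right_of_middle hf hg hfg P (hB M hM)
      (hA _ (fdLE_ker_of_projective (p := (P.π.f 0).hom) P.π_surjective hM))
  · intro hC M hM
    exact extVanish_one_middle_of_outer hf hg hfg (hA M hM) (hC M hM)
end
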